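/- Let G=(V,E) be a distance-regular graph of vertex degree d and girth 4. Then the Bakry–Émery curvature satisfies K_∞(x) = 2 for every vertex x∈V. -/

import Mathlib

/-!
Write `a_y = f y - f x` for the neighbours `y` of `x`. Expanding the definitions gives
`4 Γ₂(f)(x) = (4 - 2d) ∑ a_y² + 2 (∑ a_y)² + ∑_{y ∼ x} ∑_{w ∼ y, w ≠ x} (f w - f x - 2 a_y)²`.
Girth `4` makes `G` triangle-free, so every such `w` lies at distance `2` from `x`; by
distance-regularity it has the same number `c` of neighbours `y ∼ x`, and a `4`-cycle shows
`c ≥ 2`. Minimising the last sum over the values `f w` and counting common neighbours bounds it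
below by `4 (c - 1) / c · (d ∑ a_y² - (∑ a_y)²) ≥ 2 (d ∑ a_y² - (∑ a_y)²)`, which yields
`Γ₂ ≥ 2 Γ`. For `f = d(x, ·)` the last sum vanishes and `Γ₂(f)(x) = d = 2 Γ(f)(x)`.
-/

open Filter
open scoped Classical

variable {V : Type*}

/-- The (non-normalized) graph Laplacian `Δf(x) = ∑_{y ∼ x} (f(y) - f(x))`. -/
noncomputable def graphLap (G : SimpleGraph V) [G.LocallyFinite] (f : V → ℝ) (x : V) : ℝ :=
  ∑ y ∈ G.neighborFinset x, (f y - f x)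

/-- The operator `Γ`: `2Γ(f,g) = Δ(fg) - fΔg - gΔf`. -/
noncomputable def gammaOp (G : SimpleGraph V) [G.LocallyFinite] (f g : V → ℝ) (x : V) : ℝ :=
  (graphLap G (fun z => f z * g z) x - f x * graphLap G g x - g x * graphLap G f x) / 2

/-- The operator `Γ₂`: `2Γ₂(f) = ΔΓ(f) - 2Γ(f, Δf)`, where `Γ(f) = Γ(f,f)`. -/
noncomputable def gamma2Op (G : SimpleGraph V) [G.LocallyFinite] (f : V → ℝ) (x : V) : ℝ :=
  (graphLap G (fun z => gammaOp G f f z) x - 2 * gammaOp G f (graphLap G f) x) / 2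

/-- The set of lower Bakry–Émery curvature bounds at `x`: all `K` such that
`Γ₂(f)(x) ≥ K·Γ(f)(x)` for every `f : V → ℝ`.  The Bakry–Émery curvature `K_∞(x)` is the
largest element of this set. -/
def curvBounds (G : SimpleGraph V) [G.LocallyFinite] (x : V) : Set ℝ :=
  {K : ℝ | ∀ f : V → ℝ, K * gammaOp G f f x ≤ gamma2Op G f x}

/-- A graph is distance-regular if `|S_r(x) ∩ S_t(y)|` depends only on `r`, `t` and
`d(x,y)`. -/
def IsDistanceRegular (G : SimpleGraph V) : Prop :=
  ∀ x y x' y' : V, G.dist x y = G.dist x' y' → ∀ r t : ℕ,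
    {z | G.dist x z = r ∧ G.dist y z = t}.ncard = {z | G.dist x' z = r ∧ G.dist y' z = t}.ncard

open Finset SimpleGraph

theorem four_mul_card_mul_sum_sq_sub_le {ι : Type*} (s : Finset ι) (a : ι → ℝ) (b : ℝ) :
    4 * (#s * ∑ i ∈ s, a i ^ 2 - (∑ i ∈ s, a i) ^ 2) ≤ #s * ∑ i ∈ s, (b - 2 * a i) ^ 2 := by
  have hexpand : ∑ i ∈ s, (b - 2 * a i) ^ 2
      = #s * b ^ 2 - 4 * b * ∑ i ∈ s, a i + 4 * ∑ i ∈ s, a i ^ 2 := by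
    simp only [sub_sq, sum_add_distrib, sum_sub_distrib, sum_const, nsmul_eq_mul, mul_pow,
      ← mul_sum]
    ring
  rw [hexpand]
  nlinarith [sq_nonneg (#s * b - 2 * ∑ i ∈ s, a i)]

theorem sum_sq_sum_filter {α β : Type*} (s : Finset α) (t : Finset β) (r : α → β → Prop)
    (a : α → ℝ) :
    ∑ j ∈ t, (∑ i ∈ s with r i j, a i) ^ 2
      = ∑ i ∈ s, ∑ i' ∈ s, a i * a i' * #{j ∈ t | r i j ∧ r i' j} := by
  simp only [sum_filter, sq, sum_mul_sum]
  rw [sum_comm]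
  refine sum_congr rfl fun i _ => ?_
  rw [sum_comm]
  refine sum_congr rfl fun i' _ => ?_
  rw [card_filter, Nat.cast_sum, mul_sum]
  refine sum_congr rfl fun j _ => ?_
  by_cases h : r i j <;> by_cases h' : r i' j <;> simp [h, h']

theorem sum_sum_mul_mul_ite_eq {ι : Type*} (s : Finset ι) (a : ι → ℝ) (m l : ℝ) :
    ∑ i ∈ s, ∑ j ∈ s, a i * a j * (if i = j then m else l)
      = l * (∑ i ∈ s, a i) ^ 2 + (m - l) * ∑ i ∈ s, a i ^ 2 := by
  have hsplit : ∀ i j, a i * a j * (if i = j then m else l)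
      = l * (a i * a j) + if i = j then (m - l) * a i ^ 2 else 0 := by
    intro i j
    split_ifs with h
    · subst h; ring
    · ring
  simp only [hsplit, sum_add_distrib, ← mul_sum, sum_ite_eq, sq, sum_mul_sum]
  simp [mul_sum]

section LocalFormulas

variable (G : SimpleGraph V) [G.LocallyFinite]

theorem gammaOp_eq_sum (f g : V → ℝ) (x : V) :
    gammaOp G f g x = (∑ y ∈ G.neighborFinset x, (f y - f x) * (g y - g x)) / 2 := by
  simp only [gammaOp, graphLap, mul_sum, ← sum_sub_distrib]
  congr 1
  exact sum_congr rfl fun y _ => by ring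

theorem gammaOp_self_eq_sum (f : V → ℝ) (x : V) :
    gammaOp G f f x = (∑ y ∈ G.neighborFinset x, (f y - f x) ^ 2) / 2 := by
  simp only [gammaOp_eq_sum, sq]

variable {G} in
theorem two_mul_gammaOp_sub_mul_graphLap {x y : V} (hxy : G.Adj x y) (f : V → ℝ) :
    2 * gammaOp G f f y - 2 * ((f y - f x) * graphLap G f y)
      = (4 - G.degree y) * (f y - f x) ^ 2
        + ∑ w ∈ (G.neighborFinset y).erase x, (f w - f x - 2 * (f y - f x)) ^ 2 := by
  have hx : x ∈ G.neighborFinset y := (G.mem_neighborFinset y x).2 hxy.symm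
  have hdeg : ((#((G.neighborFinset y).erase x) : ℕ) : ℝ) = G.degree y - 1 := by
    rw [card_erase_of_mem hx, card_neighborFinset_eq_degree,
      Nat.cast_sub ((G.degree_pos_iff_exists_adj y).2 ⟨x, hxy.symm⟩), Nat.cast_one]
  have hterm : ∀ w, (f w - f x - 2 * (f y - f x)) ^ 2
      = (f w - f y) ^ 2 - 2 * (f y - f x) * (f w - f y) + (f y - f x) ^ 2 := fun w => by ring
  rw [gammaOp_self_eq_sum, graphLap, ← add_sum_erase _ _ hx, ← add_sum_erase _ _ hx]
  simp only [hterm, sum_add_distrib, sum_sub_distrib, ← mul_sum, sum_const, nsmul_eq_mul, hdeg]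
  ring

theorem four_mul_gamma2Op_eq (f : V → ℝ) (x : V) :
    4 * gamma2Op G f x
      = ∑ y ∈ G.neighborFinset x, (4 - G.degree x - G.degree y) * (f y - f x) ^ 2
        + 2 * (∑ y ∈ G.neighborFinset x, (f y - f x)) ^ 2
        + ∑ y ∈ G.neighborFinset x, ∑ w ∈ (G.neighborFinset y).erase x,
            (f w - f x - 2 * (f y - f x)) ^ 2 := by
  have hneighbors := sum_congr rfl fun y hy =>
    two_mul_gammaOp_sub_mul_graphLap ((G.mem_neighborFinset x y).1 hy) f
  rw [sum_sub_distrib, sum_add_distrib, ← mul_sum, ← mul_sum] at hneighbors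
  have hlapΓ : graphLap G (fun z => gammaOp G f f z) x
      = ∑ y ∈ G.neighborFinset x, gammaOp G f f y
        - G.degree x * ((∑ y ∈ G.neighborFinset x, (f y - f x) ^ 2) / 2) := by
    rw [graphLap, sum_sub_distrib, sum_const, nsmul_eq_mul, card_neighborFinset_eq_degree,
      gammaOp_self_eq_sum]
  have hcross : ∑ y ∈ G.neighborFinset x, (f y - f x) * (graphLap G f y - graphLap G f x)
      = ∑ y ∈ G.neighborFinset x, (f y - f x) * graphLap G f y
        - (∑ y ∈ G.neighborFinset x, (f y - f x)) * graphLap G f x := by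
    rw [sum_mul, ← sum_sub_distrib]
    exact sum_congr rfl fun y _ => mul_sub _ _ _
  have hcoeff : ∑ y ∈ G.neighborFinset x, (4 - G.degree x - G.degree y) * (f y - f x) ^ 2
      = ∑ y ∈ G.neighborFinset x, (4 - G.degree y) * (f y - f x) ^ 2
        - G.degree x * ∑ y ∈ G.neighborFinset x, (f y - f x) ^ 2 := by
    rw [mul_sum, ← sum_sub_distrib]
    exact sum_congr rfl fun y _ => by ring
  have hlap : graphLap G f x = ∑ y ∈ G.neighborFinset x, (f y - f x) := rfl
  rw [gamma2Op, hlapΓ, gammaOp_eq_sum G f (graphLap G f), hcross, hcoeff, hlap]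
  linear_combination hneighbors

end LocalFormulas

namespace SimpleGraph

variable {G : SimpleGraph V} {u v w x y y' : V}

theorem cliqueFree_three_of_three_lt_girth (h : 3 < G.girth) : G.CliqueFree 3 := by
  intro s hs
  obtain ⟨u, c, hc, hlen⟩ := G.is3Clique_iff_exists_cycle_length_three.1 ⟨s, hs⟩
  have := G.girth_le_length hc
  omega

theorem CliqueFree.not_adj_of_adj_of_adj (htf : G.CliqueFree 3) (huv : G.Adj u v)
    (hvw : G.Adj v w) : ¬G.Adj u w := fun huw =>
  htf {u, v, w} (is3Clique_triple_iff.2 ⟨huv, huw, hvw⟩)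

theorem dist_eq_two_of_adj_of_adj (huv : G.Adj u v) (hvw : G.Adj v w) (hne : u ≠ w)
    (hnadj : ¬G.Adj u w) : G.dist u w = 2 := by
  have : G.edist u w = 2 :=
    edist_eq_two_iff.2 ⟨hne, hnadj, v, G.mem_commonNeighbors.2 ⟨huv, hvw.symm⟩⟩
  simp [dist, this]

theorem exists_dist_eq_two_and_two_le_ncard_commonNeighbors [G.LocallyFinite]
    (h : G.girth = 4) : ∃ u v, G.dist u v = 2 ∧ 2 ≤ (G.commonNeighbors u v).ncard := by
  have hcyclic : ¬G.IsAcyclic := by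
    rw [← girth_eq_zero]
    omega
  obtain ⟨a, p, hp, hlen⟩ := G.exists_girth_eq_length.2 hcyclic
  rw [h] at hlen
  rcases p with _ | ⟨hab, _ | ⟨hbc, _ | ⟨hce, _ | ⟨hea, _ | ⟨_, _⟩⟩⟩⟩⟩ <;>
    simp only [Walk.length_cons, Walk.length_nil] at hlen <;> try omega
  rename_i b c e
  have hnodup := hp.support_nodup
  simp only [Walk.support_cons, Walk.support_nil, List.tail_cons, List.nodup_cons,
    List.mem_cons, List.not_mem_nil] at hnodup
  have hac : a ≠ c := by tauto
  have hbe : b ≠ e := by tauto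
  have htf := cliqueFree_three_of_three_lt_girth (G := G) (by omega)
  refine ⟨a, c, dist_eq_two_of_adj_of_adj hab hbc hac (htf.not_adj_of_adj_of_adj hab hbc), ?_⟩
  have hfin : (G.commonNeighbors a c).Finite :=
    (G.neighborSet a).toFinite.subset (G.commonNeighbors_subset_neighborSet_left a c)
  exact (Set.one_lt_ncard_iff hfin).2
    ⟨b, e, G.mem_commonNeighbors.2 ⟨hab, hbc.symm⟩, G.mem_commonNeighbors.2 ⟨hea.symm, hce⟩, hbe⟩

theorem ncard_commonNeighbors_eq_card_inter [G.LocallyFinite] (u v : V) :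
    (G.commonNeighbors u v).ncard = #(G.neighborFinset u ∩ G.neighborFinset v) := by
  rw [← Set.ncard_coe_finset, coe_inter, coe_neighborFinset, coe_neighborFinset,
    commonNeighbors_eq]

variable (G) in
/-- For triangle-free `G` this is the sphere of radius `2` about `x`. -/
noncomputable def twoStepFinset [G.LocallyFinite] (x : V) : Finset V :=
  (G.neighborFinset x).biUnion fun y => (G.neighborFinset y).erase x

variable [G.LocallyFinite]

theorem mem_twoStepFinset : w ∈ G.twoStepFinset x ↔ w ≠ x ∧ ∃ y, G.Adj x y ∧ G.Adj y w := by
  simp only [twoStepFinset, mem_biUnion, mem_erase, mem_neighborFinset]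
  tauto

theorem sum_sum_erase_eq_sum_twoStepFinset (x : V) (F : V → V → ℝ) :
    ∑ y ∈ G.neighborFinset x, ∑ w ∈ (G.neighborFinset y).erase x, F y w
      = ∑ w ∈ G.twoStepFinset x, ∑ y ∈ G.neighborFinset x with G.Adj y w, F y w :=
  sum_comm' fun y w => by
    simp only [mem_twoStepFinset, mem_erase, mem_filter, mem_neighborFinset]
    tauto

theorem card_filter_twoStepFinset_add_one (hy : G.Adj x y) (hy' : G.Adj x y') :
    #{w ∈ G.twoStepFinset x | G.Adj y w ∧ G.Adj y' w} + 1
      = #(G.neighborFinset y ∩ G.neighborFinset y') := by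
  have hfilter : {w ∈ G.twoStepFinset x | G.Adj y w ∧ G.Adj y' w}
      = (G.neighborFinset y ∩ G.neighborFinset y').erase x := by
    ext w
    simp only [mem_filter, mem_twoStepFinset, mem_erase, mem_inter, mem_neighborFinset]
    exact ⟨fun ⟨⟨hne, _⟩, h⟩ => ⟨hne, h⟩, fun ⟨hne, h⟩ => ⟨⟨hne, y, hy, h.1⟩, h⟩⟩
  rw [hfilter, card_erase_add_one]
  simp only [mem_inter, mem_neighborFinset]
  exact ⟨hy.symm, hy'.symm⟩

theorem dist_eq_two_of_mem_twoStepFinset (htf : G.CliqueFree 3) (hw : w ∈ G.twoStepFinset x) :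
    G.dist x w = 2 := by
  obtain ⟨hne, y, hxy, hyw⟩ := mem_twoStepFinset.1 hw
  exact dist_eq_two_of_adj_of_adj hxy hyw hne.symm (htf.not_adj_of_adj_of_adj hxy hyw)

variable {d c : ℕ}

theorem card_neighborFinset_filter_adj (htf : G.CliqueFree 3)
    (hc : ∀ u v, G.dist u v = 2 → (G.commonNeighbors u v).ncard = c)
    (hw : w ∈ G.twoStepFinset x) : #{y ∈ G.neighborFinset x | G.Adj y w} = c := by
  rw [← hc x w (dist_eq_two_of_mem_twoStepFinset htf hw), ncard_commonNeighbors_eq_card_inter]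
  congr 1
  ext y
  simp only [mem_filter, mem_inter, mem_neighborFinset, G.adj_comm y w]

theorem card_twoStepFinset_filter_adj_adj (hreg : G.IsRegularOfDegree d)
    (htf : G.CliqueFree 3) (hc : ∀ u v, G.dist u v = 2 → (G.commonNeighbors u v).ncard = c)
    (hy : G.Adj x y) (hy' : G.Adj x y') :
    (#{w ∈ G.twoStepFinset x | G.Adj y w ∧ G.Adj y' w} : ℝ)
      = if y = y' then (d : ℝ) - 1 else c - 1 := by
  have hcount := congrArg (Nat.cast (R := ℝ)) (card_filter_twoStepFinset_add_one hy hy')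
  split_ifs with h
  · subst h
    rw [inter_self, card_neighborFinset_eq_degree, hreg.degree_eq] at hcount
    push_cast at hcount
    linarith
  · rw [← ncard_commonNeighbors_eq_card_inter, hc y y' (dist_eq_two_of_adj_of_adj hy.symm hy' h
      (htf.not_adj_of_adj_of_adj hy.symm hy'))] at hcount
    push_cast at hcount
    linarith

end SimpleGraph

theorem IsDistanceRegular.ncard_commonNeighbors_eq {G : SimpleGraph V}
    (hdr : IsDistanceRegular G) {u v u' v' : V} (h : G.dist u v = G.dist u' v') :
    (G.commonNeighbors u v).ncard = (G.commonNeighbors u' v').ncard := by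
  have hset : ∀ u v, {z | G.dist u z = 1 ∧ G.dist v z = 1} = G.commonNeighbors u v :=
    fun u v => by ext; simp [dist_eq_one_iff_adj, mem_commonNeighbors]
  simpa only [hset] using hdr u v u' v' h 1 1

section Curvature

variable {G : SimpleGraph V} [G.LocallyFinite] {d c : ℕ}

theorem two_mul_sub_sq_le_sum_sum_erase_sq (hreg : G.IsRegularOfDegree d)
    (htf : G.CliqueFree 3) (hc : ∀ u v, G.dist u v = 2 → (G.commonNeighbors u v).ncard = c)
    (hc2 : 2 ≤ c) (x : V) (a b : V → ℝ) :
    2 * (d * ∑ y ∈ G.neighborFinset x, a y ^ 2 - (∑ y ∈ G.neighborFinset x, a y) ^ 2) ≤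
      ∑ y ∈ G.neighborFinset x, ∑ w ∈ (G.neighborFinset y).erase x, (b w - 2 * a y) ^ 2 := by
  set S := G.neighborFinset x
  set W := G.twoStepFinset x
  have hsum_sq : ∑ w ∈ W, ∑ y ∈ S with G.Adj y w, a y ^ 2 = ((d : ℝ) - 1) * ∑ y ∈ S, a y ^ 2 := by
    rw [← sum_sum_erase_eq_sum_twoStepFinset x fun y _ => a y ^ 2, mul_sum]
    refine sum_congr rfl fun y hy => ?_
    have hxy := (G.mem_neighborFinset x y).1 hy
    rw [sum_const, nsmul_eq_mul, card_erase_of_mem ((G.mem_neighborFinset y x).2 hxy.symm),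
      card_neighborFinset_eq_degree,
      Nat.cast_pred ((G.degree_pos_iff_exists_adj y).2 ⟨x, hxy.symm⟩), hreg.degree_eq]
  have hsq_sum : ∑ w ∈ W, (∑ y ∈ S with G.Adj y w, a y) ^ 2
      = ((c : ℝ) - 1) * (∑ y ∈ S, a y) ^ 2 + ((d : ℝ) - c) * ∑ y ∈ S, a y ^ 2 := by
    rw [sum_sq_sum_filter, sum_congr rfl fun y hy => sum_congr rfl fun y' hy' => by
      rw [card_twoStepFinset_filter_adj_adj hreg htf hc ((G.mem_neighborFinset x y).1 hy)
        ((G.mem_neighborFinset x y').1 hy')], sum_sum_mul_mul_ite_eq]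
    ring
  -- Regroup by `w`, which has exactly `c` neighbours in `S`, and minimise over the value `b w`.
  have hregroup : 4 * (c * ((d - 1) * ∑ y ∈ S, a y ^ 2)
        - ((c - 1) * (∑ y ∈ S, a y) ^ 2 + (d - c) * ∑ y ∈ S, a y ^ 2))
      ≤ c * ∑ y ∈ S, ∑ w ∈ (G.neighborFinset y).erase x, (b w - 2 * a y) ^ 2 := by
    rw [← hsum_sq, ← hsq_sum, sum_sum_erase_eq_sum_twoStepFinset, mul_sum, mul_sum,
      ← sum_sub_distrib, mul_sum]
    refine sum_le_sum fun w hw => ?_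
    have := four_mul_card_mul_sum_sq_sub_le {y ∈ S | G.Adj y w} a (b w)
    rwa [card_neighborFinset_filter_adj htf hc hw] at this
  have hcauchy : (∑ y ∈ S, a y) ^ 2 ≤ d * ∑ y ∈ S, a y ^ 2 := by
    simpa [S, card_neighborFinset_eq_degree, hreg.degree_eq] using
      sq_sum_le_card_mul_sum_sq (s := S) (f := a)
  have hc2' : (2 : ℝ) ≤ c := by exact_mod_cast hc2
  refine le_of_mul_le_mul_left ?_ (by positivity : (0 : ℝ) < c)
  nlinarith [mul_nonneg (sub_nonneg.2 hc2') (sub_nonneg.2 hcauchy)]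

theorem two_mem_curvBounds (hreg : G.IsRegularOfDegree d) (htf : G.CliqueFree 3)
    (hc : ∀ u v, G.dist u v = 2 → (G.commonNeighbors u v).ncard = c) (hc2 : 2 ≤ c) (x : V) :
    2 ∈ curvBounds G x := by
  intro f
  have hformula := four_mul_gamma2Op_eq G f x
  simp only [hreg.degree_eq, ← mul_sum] at hformula
  have hkey := two_mul_sub_sq_le_sum_sum_erase_sq hreg htf hc hc2 x (fun y => f y - f x)
    (fun w => f w - f x)
  rw [gammaOp_self_eq_sum]
  linarith

theorem le_two_of_mem_curvBounds (hreg : G.IsRegularOfDegree d) (hd : 0 < d)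
    (htf : G.CliqueFree 3) {x : V} {K : ℝ} (hK : K ∈ curvBounds G x) : K ≤ 2 := by
  set f : V → ℝ := fun v => G.dist x v
  have hneighbor : ∀ y ∈ G.neighborFinset x, f y - f x = 1 := fun y hy => by
    simp [f, dist_eq_one_iff_adj.2 ((G.mem_neighborFinset x y).1 hy)]
  have htwoStep : ∀ y ∈ G.neighborFinset x, ∀ w ∈ (G.neighborFinset y).erase x,
      f w - f x - 2 * (f y - f x) = 0 := fun y hy w hw => by
    rw [hneighbor y hy]
    simp [f, dist_eq_two_of_mem_twoStepFinset htf (mem_biUnion.2 ⟨y, hy, hw⟩)]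
  have hlinear : ∑ y ∈ G.neighborFinset x, (f y - f x) = d := by
    simp [sum_congr rfl hneighbor, card_neighborFinset_eq_degree, hreg.degree_eq]
  have hquadratic : ∑ y ∈ G.neighborFinset x, (f y - f x) ^ 2 = d := by
    rw [← hlinear]
    exact sum_congr rfl fun y hy => by rw [hneighbor y hy, one_pow]
  have hrest : ∑ y ∈ G.neighborFinset x, ∑ w ∈ (G.neighborFinset y).erase x,
      (f w - f x - 2 * (f y - f x)) ^ 2 = 0 :=
    sum_eq_zero fun y hy => sum_eq_zero fun w hw => by rw [htwoStep y hy w hw]; norm_num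
  have hformula := four_mul_gamma2Op_eq G f x
  simp only [hreg.degree_eq, ← mul_sum, hquadratic, hlinear, hrest] at hformula
  have hbound := hK f
  rw [gammaOp_self_eq_sum, hquadratic] at hbound
  have hd' : (0 : ℝ) < d := by exact_mod_cast hd
  nlinarith

end Curvature

theorem stmt_18_general (G : SimpleGraph V) [G.LocallyFinite]
    (d : ℕ) (hreg : G.IsRegularOfDegree d) (hdr : IsDistanceRegular G)
    (hgirth : G.girth = 4) :
    ∀ x : V, IsGreatest (curvBounds G x) 2 := by
  have htf : G.CliqueFree 3 := cliqueFree_three_of_three_lt_girth (by omega)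
  obtain ⟨u, v, huv, hc2⟩ := exists_dist_eq_two_and_two_le_ncard_commonNeighbors hgirth
  have hd : 0 < d := by
    obtain ⟨z, hz⟩ := Set.nonempty_of_ncard_ne_zero (by omega : (G.commonNeighbors u v).ncard ≠ 0)
    rw [← hreg.degree_eq u]
    exact (G.degree_pos_iff_exists_adj u).2 ⟨z, (G.mem_commonNeighbors.1 hz).1⟩
  have hc : ∀ u' v', G.dist u' v' = 2 →
      (G.commonNeighbors u' v').ncard = (G.commonNeighbors u v).ncard :=
    fun u' v' h => hdr.ncard_commonNeighbors_eq (h.trans huv.symm)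
  exact fun x => ⟨two_mem_curvBounds hreg htf hc hc2 x,
    fun K hK => le_two_of_mem_curvBounds hreg hd htf hK⟩

/-- For a distance-regular graph of vertex degree `d` and girth `4`,
the Bakry–Émery curvature satisfies `K_∞(x) = 2` at every vertex `x`, i.e. `2` is the
largest lower curvature bound at `x`. -/
theorem stmt_18 (G : SimpleGraph V) [G.LocallyFinite] (hconn : G.Connected)
    (d : ℕ) (hreg : G.IsRegularOfDegree d) (hdr : IsDistanceRegular G)
    (hgirth : G.girth = 4) :
    ∀ x : V, IsGreatest (curvBounds G x) 2 :=
  stmt_18_general G d hreg hdr hgirth
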